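/- Let X = G, acting on itself by left multiplication, and let e be a twist on G. For g ∈ G and r ∈ R define ξ_{g,r} : G×G → R by ξ_{g,r}(x,y) = δ_{y,xg}·e(x)·x(r). Then each ξ_{g,r} belongs to R_G(G×G), and for all g, g' ∈ G and r, r' ∈ R one has ξ_{g,r} * ξ_{g',r'} = ξ_{gg', r·g(r')} in the twisted convolution algebra R_G(G×G). -/

import Mathlib

/-!
Only the summand `z = x * g` of the twisted convolution survives, and there the factor
`e(xg)⁻¹` cancels the `e(xg)` carried by `ξ_{g',r'}(xg, y)`; the remaining
`x(r) · (xg)(r') = x(r · g(r'))` is the value of `ξ_{gg', r·g(r')}`.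
-/

open Finset

/-- `ξ_{g,r}(x,y) = δ_{y,xg}·e(x)·x(r)`. -/
noncomputable def xiEl {G R : Type*} [Group G] [DecidableEq G] [Ring R]
    [MulSemiringAction G R] (e : G → R) (g : G) (r : R) : G → G → R :=
  fun x y => if y = x * g then e x * (x • r) else 0

section

variable {G R : Type*} [Group G] [DecidableEq G] [Ring R] [MulSemiringAction G R]
  {e : G → R}

theorem xiEl_apply_mul (e : G → R) (g : G) (r : R) (x : G) :
    xiEl e g r x (x * g) = e x * (x • r) :=
  if_pos rfl

theorem xiEl_of_ne {g : G} {r : R} {x y : G} (hy : y ≠ x * g) : xiEl e g r x y = 0 :=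
  if_neg hy

theorem xiEl_smul_smul (heq : ∀ h x : G, e (h • x) = h • e x) (g : G) (r : R) (h x y : G) :
    xiEl e g r (h • x) (h • y) = h • xiEl e g r x y := by
  by_cases hy : y = x * g
  · subst hy
    rw [smul_eq_mul, smul_eq_mul, ← mul_assoc, xiEl_apply_mul, xiEl_apply_mul, smul_mul',
      mul_smul, ← smul_eq_mul h x, heq]
  · have hhy : h • y ≠ h • x * g := by
      rwa [smul_eq_mul, smul_eq_mul, mul_assoc, Ne, mul_right_inj]
    rw [xiEl_of_ne hy, xiEl_of_ne hhy, smul_zero]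

theorem sum_xiEl_mul_inverse_mul_xiEl [Fintype G] (hu : ∀ x, IsUnit (e x))
    (g g' : G) (r r' : R) (x y : G) :
    ∑ z, xiEl e g r x z * Ring.inverse (e z) * xiEl e g' r' z y =
      xiEl e (g * g') (r * (g • r')) x y := by
  rw [Fintype.sum_eq_single (x * g) fun z hz => by rw [xiEl_of_ne hz, zero_mul, zero_mul],
    xiEl_apply_mul]
  by_cases hy : y = x * g * g'
  · subst hy
    rw [xiEl_apply_mul e g' r' (x * g), mul_assoc x g g', xiEl_apply_mul, mul_assoc (e x * _), ← mul_assoc (Ring.inverse _), Ring.inverse_mul_cancel _ (hu _),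
      one_mul, mul_smul, mul_assoc, smul_mul']
  · have hy' : y ≠ x * (g * g') := by rwa [← mul_assoc]
    rw [xiEl_of_ne hy, xiEl_of_ne hy', mul_zero]

end

theorem stmt7 {G R : Type*} [Group G] [Fintype G] [DecidableEq G]
    [Ring R] [MulSemiringAction G R]
    (e : G → R) (heq : ∀ h x : G, e (h • x) = h • e x) (hu : ∀ x, IsUnit (e x))
    (g g' : G) (r r' : R) :
    -- `ξ_{g,r}` is `G`-equivariant (for the left-multiplication action of `G` on itself)
    (∀ h x y : G, xiEl e g r (h • x) (h • y) = h • xiEl e g r x y) ∧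
    -- the twisted convolution product formula
    (∀ x y : G,
      (∑ z, xiEl e g r x z * Ring.inverse (e z) * xiEl e g' r' z y) =
        xiEl e (g * g') (r * (g • r')) x y) :=
  ⟨xiEl_smul_smul heq g r, sum_xiEl_mul_inverse_mul_xiEl hu g g' r r'⟩
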